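/- Let L be a restricted Lie algebra over a field of characteristic p > 0. Then the derived-ideal identity L'_p·u(L) = [ω(L), ω(L)]·u(L) holds, where L'_p is the restricted subalgebra of L generated by the derived subalgebra L' and [ω(L), ω(L)] is the span of commutators ab − ba with a, b ∈ ω(L). -/

import Mathlib

open UniversalEnvelopingAlgebra
open scoped TensorProduct

/-! Infrastructure: restricted Lie algebras and their restricted enveloping algebras
(not yet in Mathlib). -/

section Restricted

attribute [local instance 100] LieRing.ofAssociativeRing

variable (F : Type*) [Field F] (p : ℕ) (L : Type*) [LieRing L] [LieAlgebra F L]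

/-- The element `ad(λ·x + y)^{p-1}(x)` of `F[λ] ⊗ L`, whose `λ^{i-1}`-coefficient is
`i·sᵢ(x,y)`. -/
noncomputable def adLambdaPow (x y : L) : Polynomial F ⊗[F] L :=
  ((LieAlgebra.ad (Polynomial F) (Polynomial F ⊗[F] L)
      (Polynomial.X ⊗ₜ[F] x + 1 ⊗ₜ[F] y)) ^ (p - 1)) (1 ⊗ₜ[F] x)

/-- Extraction of the coefficient of `λ^i` from an element of `F[λ] ⊗ L`. -/
noncomputable def lamCoeff (i : ℕ) : Polynomial F ⊗[F] L →ₗ[F] L :=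
  (TensorProduct.lid F L).toLinearMap ∘ₗ LinearMap.rTensor L (Polynomial.lcoeff F i)

/-- The element `sᵢ(x,y)`, defined by: `i·sᵢ(x,y)` is the coefficient of `λ^{i-1}` in
`ad(λ·x + y)^{p-1}(x)`. -/
noncomputable def sElt (i : ℕ) (x y : L) : L :=
  ((i : F)⁻¹) • lamCoeff F L (i - 1) (adLambdaPow F p L x y)

/-- A `[p]`-mapping on the Lie algebra `L`, making `(L, [p])` a restricted Lie algebra:
(1) `ad(x^{[p]}) = (ad x)^p`; (2) `(α·x)^{[p]} = α^p·x^{[p]}`;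
(3) `(x+y)^{[p]} = x^{[p]} + y^{[p]} + Σ_{i=1}^{p-1} sᵢ(x,y)`. -/
structure PMapOn where
  toFun : L → L
  ad_pow : ∀ x : L, LieAlgebra.ad F L (toFun x) = (LieAlgebra.ad F L x) ^ p
  smul_pow : ∀ (a : F) (x : L), toFun (a • x) = a ^ p • toFun x
  add_pow : ∀ x y : L, toFun (x + y) =
    toFun x + toFun y + ∑ i ∈ Finset.Icc 1 (p - 1), sElt F p L i x y

variable {F p L} (pm : PMapOn F p L)

/-- The relation `x^{[p]} ∼ x^p` on `U(L)` whose quotient is the restricted enveloping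
algebra `u(L)`. -/
def uRel (a b : UniversalEnvelopingAlgebra F L) : Prop :=
  ∃ x : L, a = ι F (pm.toFun x) ∧ b = (ι F x) ^ p

/-- The restricted enveloping algebra `u(L) = U(L)/(x^{[p]} - x^p)`. -/
def uEnv := RingQuot (uRel pm)

noncomputable instance : Ring (uEnv pm) := inferInstanceAs (Ring (RingQuot (uRel pm)))
noncomputable instance : Algebra F (uEnv pm) :=
  inferInstanceAs (Algebra F (RingQuot (uRel pm)))

/-- The canonical map `L → u(L)` (injective by Jacobson's PBW theorem). -/
noncomputable def uIota : L →ₗ[F] uEnv pm :=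
  (RingQuot.mkAlgHom F (uRel pm)).toLinearMap ∘ₗ (ι F : L →ₗ⁅F⁆ _).toLinearMap

/-- The augmentation map `u(L) → F`. -/
noncomputable def uAug (hp : p ≠ 0) : uEnv pm →ₐ[F] F :=
  RingQuot.liftAlgHom F
    ⟨UniversalEnvelopingAlgebra.lift F (0 : L →ₗ⁅F⁆ F), by
      rintro a b ⟨x, rfl, rfl⟩
      simp [UniversalEnvelopingAlgebra.lift_ι_apply, zero_pow hp]⟩

/-- The augmentation ideal `ω(L)` of `u(L)`. -/
noncomputable def uAugIdeal (hp : p ≠ 0) : Submodule F (uEnv pm) :=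
  LinearMap.ker (uAug pm hp).toLinearMap

/-- The `n`-th dimension subalgebra `D_n(L) = L ∩ ω(L)^n`. -/
noncomputable def dimSubalgebra (hp : p ≠ 0) (n : ℕ) : Submodule F L :=
  Submodule.comap (uIota pm) (uAugIdeal pm hp ^ n)

/-- The restricted subalgebra of `L` generated by a subset `X`: the smallest `F`-submodule
containing `X` that is closed under the Lie bracket and under the `p`-map. -/
def restrictedSpan (X : Set L) : Submodule F L :=
  sInf {S : Submodule F L | X ⊆ S ∧ (∀ a ∈ S, ∀ b ∈ S, ⁅a, b⁆ ∈ S) ∧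
    ∀ a ∈ S, pm.toFun a ∈ S}

end Restricted

/-! `⊆`: the `s ∈ L` with `s·u(L) ⊆ [ω, ω]·u(L)` form a subspace containing every bracket
`[x, y] = xy - yx` (as `L ⊆ ω`) and stable under `x ↦ x^[p] = x·x^(p-1)`, so it contains `L'_p`.
`⊇`: `L'_p` is an ideal of `L`, so `L'_p·u(L)` is a two-sided ideal of `u(L)`; it contains the
commutators of the generators `L` of `u(L)`, hence all commutators. -/

section CommutatorIdeal

variable {F A : Type*} [CommRing F] [Ring A] [Algebra F A]

theorem Submodule.mul_mem_span_of_forall_mul_mem {S : Set A} (hS : ∀ z ∈ S, ∀ v, z * v ∈ S)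
    {z : A} (hz : z ∈ Submodule.span F S) (v : A) : z * v ∈ Submodule.span F S := by
  induction hz using Submodule.span_induction with
  | mem z hz => exact Submodule.subset_span (hS z hz v)
  | zero => simp
  | add a b _ _ ha hb => rw [add_mul]; exact add_mem ha hb
  | smul r a _ ha => rw [smul_mul_assoc]; exact Submodule.smul_mem _ r ha

theorem Submodule.mul_mem_of_adjoin_eq_top {G : Set A} (hG : Algebra.adjoin F G = ⊤)
    {I : Submodule F A} (hI : ∀ g ∈ G, ∀ z ∈ I, g * z ∈ I) (a : A) {z : A} (hz : z ∈ I) :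
    a * z ∈ I := by
  have ha : a ∈ Algebra.adjoin F G := hG ▸ Algebra.mem_top
  induction ha using Algebra.adjoin_induction generalizing z with
  | mem g hg => exact hI g hg z hz
  | algebraMap r => rw [← Algebra.smul_def]; exact I.smul_mem r hz
  | add a b _ _ ha hb => rw [add_mul]; exact add_mem (ha hz) (hb hz)
  | mul a b _ _ ha hb => rw [mul_assoc]; exact ha (hb hz)

/-- Uses `[ab, c] = a[b, c] + [a, c]b`. -/
theorem Submodule.commutator_mem_of_adjoin_eq_top {G : Set A} (hG : Algebra.adjoin F G = ⊤)
    {I : Submodule F A} (hleft : ∀ a, ∀ z ∈ I, a * z ∈ I) (hright : ∀ z ∈ I, ∀ a, z * a ∈ I)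
    (hcomm : ∀ g ∈ G, ∀ h ∈ G, g * h - h * g ∈ I) (a b : A) : a * b - b * a ∈ I := by
  have key : ∀ c, (∀ g ∈ G, g * c - c * g ∈ I) → ∀ a, a * c - c * a ∈ I := by
    intro c hc a
    have ha : a ∈ Algebra.adjoin F G := hG ▸ Algebra.mem_top
    induction ha using Algebra.adjoin_induction with
    | mem g hg => exact hc g hg
    | algebraMap r => simp [Algebra.commutes]
    | add a b _ _ ha hb =>
      rw [show (a + b) * c - c * (a + b) = (a * c - c * a) + (b * c - c * b) by noncomm_ring]
      exact add_mem ha hb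
    | mul a b _ _ ha hb =>
      rw [show a * b * c - c * (a * b) = a * (b * c - c * b) + (a * c - c * a) * b by
        noncomm_ring]
      exact add_mem (hleft a _ hb) (hright _ ha b)
  refine key b (fun g hg => ?_) a
  rw [← neg_sub]
  exact neg_mem (key g (hcomm · · g hg) b)

end CommutatorIdeal

section RestrictedEnveloping

attribute [local instance 100] LieRing.ofAssociativeRing

variable {F : Type*} [Field F] {p : ℕ} {L : Type*} [LieRing L] [LieAlgebra F L]
  (pm : PMapOn F p L)

theorem adjoin_range_uIota : Algebra.adjoin F (Set.range (uIota pm)) = ⊤ := by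
  let f : TensorAlgebra F L →ₐ[F] uEnv pm :=
    (RingQuot.mkAlgHom F (uRel pm)).comp (UniversalEnvelopingAlgebra.mkAlgHom F L)
  have hf : Function.Surjective f :=
    (RingQuot.mkAlgHom_surjective F _).comp (RingCon.mkₐ_surjective (α := F) _)
  have hrange : Set.range (uIota pm) = f '' Set.range (TensorAlgebra.ι F) := by
    rw [← Set.range_comp]; rfl
  rw [hrange, ← AlgHom.map_adjoin, TensorAlgebra.adjoin_range_ι, Algebra.map_top,
    AlgHom.range_eq_top]
  exact hf

theorem uIota_pmap (x : L) : uIota pm (pm.toFun x) = uIota pm x ^ p := by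
  have h := RingQuot.mkAlgHom_rel F
    (show uRel pm (ι F (pm.toFun x)) (ι F x ^ p) from ⟨x, rfl, rfl⟩)
  rw [map_pow] at h
  exact h

theorem uIota_lie (x y : L) :
    uIota pm ⁅x, y⁆ = uIota pm x * uIota pm y - uIota pm y * uIota pm x := by
  change RingQuot.mkAlgHom F (uRel pm) ((ι F : L →ₗ⁅F⁆ _) ⁅x, y⁆) = _
  rw [LieHom.map_lie, Ring.lie_def, map_sub, map_mul, map_mul]
  rfl

theorem uIota_mem_uAugIdeal (hp : p ≠ 0) (x : L) : uIota pm x ∈ uAugIdeal pm hp := by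
  change uAug pm hp (RingQuot.mkAlgHom F (uRel pm) (ι F x)) = 0
  exact (RingQuot.liftAlgHom_mkAlgHom_apply F _ _ _).trans
    (UniversalEnvelopingAlgebra.lift_ι_apply F _ x)

theorem subset_restrictedSpan (X : Set L) : X ⊆ restrictedSpan pm X :=
  fun _ hx => Submodule.mem_sInf.2 fun _ hS => hS.1 hx

theorem restrictedSpan_le {X : Set L} {S : Submodule F L} (hX : X ⊆ S)
    (hlie : ∀ a ∈ S, ∀ b ∈ S, ⁅a, b⁆ ∈ S) (hpm : ∀ a ∈ S, pm.toFun a ∈ S) :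
    restrictedSpan pm X ≤ S :=
  sInf_le ⟨hX, hlie, hpm⟩

noncomputable def uRightIdeal (R : Submodule F L) : Submodule F (uEnv pm) :=
  Submodule.span F {z | ∃ s ∈ R, ∃ u, z = uIota pm s * u}

theorem uRightIdeal_mul_mem {R : Submodule F L} {z : uEnv pm} (hz : z ∈ uRightIdeal pm R)
    (v : uEnv pm) : z * v ∈ uRightIdeal pm R :=
  Submodule.mul_mem_span_of_forall_mul_mem
    (by rintro _ ⟨s, hs, u, rfl⟩ v; exact ⟨s, hs, u * v, mul_assoc _ _ _⟩) hz v

/-- Uses `y·s·u = s·(y·u) + [y, s]·u`. -/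
theorem mul_mem_uRightIdeal {R : Submodule F L} (hR : ∀ (y : L), ∀ s ∈ R, ⁅y, s⁆ ∈ R)
    (a : uEnv pm) {z : uEnv pm} (hz : z ∈ uRightIdeal pm R) : a * z ∈ uRightIdeal pm R := by
  refine Submodule.mul_mem_of_adjoin_eq_top (adjoin_range_uIota pm) ?_ a hz
  rintro _ ⟨y, rfl⟩ z hz
  induction hz using Submodule.span_induction with
  | mem z hz =>
    obtain ⟨s, hs, u, rfl⟩ := hz
    rw [show uIota pm y * (uIota pm s * u) =
        uIota pm s * (uIota pm y * u) + uIota pm ⁅y, s⁆ * u by rw [uIota_lie]; noncomm_ring]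
    exact add_mem (Submodule.subset_span ⟨s, hs, _, rfl⟩)
      (Submodule.subset_span ⟨_, hR y s hs, u, rfl⟩)
  | zero => simp
  | add a b _ _ ha hb => rw [mul_add]; exact add_mem ha hb
  | smul r a _ ha => rw [mul_smul_comm]; exact Submodule.smul_mem _ r ha

theorem commutator_mem_uRightIdeal {R : Submodule F L} (hR : ∀ x y : L, ⁅x, y⁆ ∈ R)
    (a b : uEnv pm) : a * b - b * a ∈ uRightIdeal pm R := by
  refine Submodule.commutator_mem_of_adjoin_eq_top (adjoin_range_uIota pm)
    (mul_mem_uRightIdeal pm fun y s _ => hR y s) (fun _ hz => uRightIdeal_mul_mem pm hz) ?_ a b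
  rintro _ ⟨x, rfl⟩ _ ⟨y, rfl⟩
  rw [← uIota_lie]
  exact Submodule.subset_span ⟨_, hR x y, 1, (mul_one _).symm⟩

noncomputable def uIotaMulMem (K : Submodule F (uEnv pm)) : Submodule F L :=
  ⨅ u : uEnv pm, K.comap (LinearMap.mulRight F u ∘ₗ uIota pm)

theorem mem_uIotaMulMem {K : Submodule F (uEnv pm)} {s : L} :
    s ∈ uIotaMulMem pm K ↔ ∀ u, uIota pm s * u ∈ K := by
  simp [uIotaMulMem]

theorem pmap_mem_uIotaMulMem (hp : p ≠ 0) {K : Submodule F (uEnv pm)} {s : L}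
    (hs : s ∈ uIotaMulMem pm K) : pm.toFun s ∈ uIotaMulMem pm K := by
  obtain ⟨q, rfl⟩ := Nat.exists_eq_succ_of_ne_zero hp
  rw [mem_uIotaMulMem] at hs ⊢
  intro u
  rw [uIota_pmap, pow_succ', mul_assoc]
  exact hs _

theorem uRightIdeal_le {R : Submodule F L} {K : Submodule F (uEnv pm)}
    (h : R ≤ uIotaMulMem pm K) : uRightIdeal pm R ≤ K :=
  Submodule.span_le.2 fun _ ⟨_, hs, u, hz⟩ => hz ▸ (mem_uIotaMulMem pm).1 (h hs) u

end RestrictedEnveloping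

theorem derived_ideal_eq_commutator_ideal_general (F : Type*) [Field F] (p : ℕ) [Fact p.Prime]
    (L : Type*) [LieRing L] [LieAlgebra F L] (pm : PMapOn F p L) :
    Submodule.span F {z : uEnv pm | ∃ s ∈ restrictedSpan pm {w : L | ∃ x y : L, w = ⁅x, y⁆},
        ∃ u : uEnv pm, z = uIota pm s * u} =
      Submodule.span F {z : uEnv pm |
        ∃ a ∈ uAugIdeal pm (Fact.out : p.Prime).ne_zero,
        ∃ b ∈ uAugIdeal pm (Fact.out : p.Prime).ne_zero,
        ∃ u : uEnv pm, z = (a * b - b * a) * u} := by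
  have hp : p ≠ 0 := (Fact.out : p.Prime).ne_zero
  set D := restrictedSpan pm {w : L | ∃ x y : L, w = ⁅x, y⁆}
  set J := Submodule.span F {z : uEnv pm | ∃ a ∈ uAugIdeal pm hp, ∃ b ∈ uAugIdeal pm hp,
    ∃ u : uEnv pm, z = (a * b - b * a) * u}
  have lie_mem : ∀ x y : L, ⁅x, y⁆ ∈ uIotaMulMem pm J := fun x y =>
    (mem_uIotaMulMem pm).2 fun u => Submodule.subset_span
      ⟨_, uIota_mem_uAugIdeal pm hp x, _, uIota_mem_uAugIdeal pm hp y, u, by rw [uIota_lie]⟩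
  have derived_le : D ≤ uIotaMulMem pm J :=
    restrictedSpan_le pm (by rintro _ ⟨x, y, rfl⟩; exact lie_mem x y) (fun a _ b _ => lie_mem a b)
      (fun _ => pmap_mem_uIotaMulMem pm hp)
  have lie_mem_derived : ∀ x y : L, ⁅x, y⁆ ∈ D := fun x y =>
    subset_restrictedSpan pm _ ⟨x, y, rfl⟩
  refine le_antisymm (uRightIdeal_le pm derived_le) (Submodule.span_le.2 ?_)
  rintro _ ⟨a, -, b, -, u, rfl⟩
  exact uRightIdeal_mul_mem pm (commutator_mem_uRightIdeal pm lie_mem_derived a b) u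

/-- `L'_p·u(L) = [ω(L), ω(L)]·u(L)`: the right ideal of `u(L)` generated by the
restricted subalgebra `L'_p` generated by the derived subalgebra `L' = [L,L]` coincides with the
right ideal generated by all commutators of elements of the augmentation ideal `ω(L)`. -/
theorem derived_ideal_eq_commutator_ideal (F : Type*) [Field F] (p : ℕ) [Fact p.Prime]
    [CharP F p] (L : Type*) [LieRing L] [LieAlgebra F L] (pm : PMapOn F p L) :
    Submodule.span F {z : uEnv pm | ∃ s ∈ restrictedSpan pm {w : L | ∃ x y : L, w = ⁅x, y⁆},
        ∃ u : uEnv pm, z = uIota pm s * u} =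
      Submodule.span F {z : uEnv pm |
        ∃ a ∈ uAugIdeal pm (Fact.out : p.Prime).ne_zero,
        ∃ b ∈ uAugIdeal pm (Fact.out : p.Prime).ne_zero,
        ∃ u : uEnv pm, z = (a * b - b * a) * u} :=
  derived_ideal_eq_commutator_ideal_general F p L pm
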